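/- arXiv:2302.05344 — 4 statements merged into one kernel-verified Lean document; each statement's English description precedes it below -/
import Mathlib

section
/- A torsion-free virtually cyclic group is cyclic. -/
/-!
Let `N` be the normal core of the cyclic subgroup of finite index and `C` its centralizer. Then
`N` is a central subgroup of finite index in `C`, so the transfer `C → N` is `g ↦ g ^ [C : N]`;
torsion-freeness makes it injective, hence `C = ⟨c⟩` is cyclic. `C` is normal, so conjugation by
any `g` sends `c` to `c` or to `c⁻¹`. In the first case `g ∈ C`. In the second, `g²` fixes `c`,
so `g² ∈ C` is inverted by `g` while commuting with it; thus `g² = 1` and `g = 1`.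
-/

open Subgroup

/-- A monoid is torsion-free if no nontrivial element has finite order
(the definition `Monoid.IsTorsionFree` of the older Mathlib, since removed). -/
def Monoid.IsTorsionFree (G : Type*) [Monoid G] : Prop :=
  ∀ g : G, g ≠ 1 → ¬IsOfFinOrder g

section

variable {G : Type*} [Group G]

theorem conj_eq_or_eq_inv_of_zpowers_normal {x : G} (hx : ¬IsOfFinOrder x)
    [hN : (zpowers x).Normal] (g : G) : g * x * g⁻¹ = x ∨ g * x * g⁻¹ = x⁻¹ := by
  obtain ⟨k, hk⟩ := mem_zpowers_iff.mp (hN.conj_mem x (mem_zpowers x) g)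
  obtain ⟨m, hm⟩ := mem_zpowers_iff.mp (hN.conj_mem x (mem_zpowers x) g⁻¹)
  have hkm : k * m = 1 := injective_zpow_iff_not_isOfFinOrder.mpr hx <| by
    calc x ^ (k * m) = (x ^ m) ^ k := by rw [← zpow_mul, mul_comm]
      _ = g⁻¹ * x ^ k * g := by rw [hm, conj_zpow, inv_inv]
      _ = x ^ (1 : ℤ) := by rw [hk]; group
  rcases Int.eq_one_or_neg_one_of_mul_eq_one hkm with rfl | rfl
  · exact .inl (by rw [← hk, zpow_one])
  · exact .inr (by rw [← hk, zpow_neg_one])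

theorem sq_eq_one_of_conj_eq_inv {x g : G} (hx : ¬IsOfFinOrder x) (hg : g * x * g⁻¹ = x⁻¹)
    (hg2 : g ^ 2 ∈ zpowers x) : g ^ 2 = 1 := by
  obtain ⟨j, hj⟩ := mem_zpowers_iff.mp hg2
  have : x ^ (-j) = x ^ j :=
    calc x ^ (-j) = (g * x * g⁻¹) ^ j := by rw [hg, inv_zpow']
      _ = g * g ^ 2 * g⁻¹ := by rw [conj_zpow, hj]
      _ = x ^ j := by rw [hj]; group
  have hj0 : j = 0 := by have := injective_zpow_iff_not_isOfFinOrder.mpr hx this; omega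
  rw [← hj, hj0, zpow_zero]

namespace Monoid.IsTorsionFree

theorem eq_one_of_pow_eq_one (htf : IsTorsionFree G) {g : G} {n : ℕ} (hn : n ≠ 0)
    (h : g ^ n = 1) : g = 1 := by
  by_contra hg
  exact htf g hg (isOfFinOrder_iff_pow_eq_one.mpr ⟨n, Nat.pos_of_ne_zero hn, h⟩)

theorem subgroup (htf : IsTorsionFree G) (H : Subgroup G) : IsTorsionFree H :=
  fun g hg hfin ↦ htf g (by simpa using hg) (H.subtype.isOfFinOrder hfin)

open scoped IsMulCommutative in
theorem isCyclic_of_le_center (htf : IsTorsionFree G) (H : Subgroup G) [H.FiniteIndex]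
    [IsCyclic H] (hH : H ≤ center G) : IsCyclic G := by
  have transfer_apply (g : G) : (MonoidHom.transfer (MonoidHom.id H) g : G) = g ^ H.index := by
    rw [MonoidHom.transfer_eq_pow _ g fun k g₀ hk ↦ ?_]
    · rfl
    · rw [← mul_right_inj g₀⁻¹, mem_center_iff.mp (hH hk) g₀⁻¹, mul_inv_cancel_right]
  refine isCyclic_of_injective (MonoidHom.transfer (MonoidHom.id H))
    ((injective_iff_map_eq_one _).mpr fun g hg ↦
      htf.eq_one_of_pow_eq_one (FiniteIndex.index_ne_zero (H := H)) ?_)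
  rw [← transfer_apply, hg, OneMemClass.coe_one]

theorem zpowers_eq_top_of_centralizer_le (htf : IsTorsionFree G) {c : G} [(zpowers c).Normal]
    (hc : centralizer (zpowers c) ≤ zpowers c) : zpowers c = ⊤ := by
  rcases eq_or_ne c 1 with rfl | hc1
  · rw [zpowers_one_eq_bot] at hc ⊢
    exact eq_top_iff.mpr fun g _ ↦ hc (mem_centralizer_iff.mpr (by simp))
  have hcfin := htf c hc1
  have mem_of_conj_eq (g : G) (hg : g * c * g⁻¹ = c) : g ∈ zpowers c := by
    refine hc ?_
    rw [zpowers_eq_closure, centralizer_closure, mem_centralizer_singleton_iff]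
    exact mul_inv_eq_iff_eq_mul.mp hg
  refine (zpowers c).eq_top_iff'.mpr fun g ↦ ?_
  rcases conj_eq_or_eq_inv_of_zpowers_normal hcfin g with hg | hg
  · exact mem_of_conj_eq g hg
  · have hg2 : g ^ 2 * c * (g ^ 2)⁻¹ = c :=
      calc g ^ 2 * c * (g ^ 2)⁻¹ = g * (g * c * g⁻¹) * g⁻¹ := by
            simp only [sq, mul_inv_rev, mul_assoc]
        _ = (g * c * g⁻¹)⁻¹ := by rw [conj_inv, hg]
        _ = c := by rw [hg, inv_inv]
    rw [htf.eq_one_of_pow_eq_one two_ne_zero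
      (sq_eq_one_of_conj_eq_inv hcfin hg (mem_of_conj_eq _ hg2))]
    exact one_mem _

end Monoid.IsTorsionFree

end

/-- A torsion-free virtually cyclic group is cyclic. -/
theorem torsionFree_virtually_cyclic_isCyclic {G : Type*} [Group G]
    (htf : Monoid.IsTorsionFree G)
    (hvc : ∃ H : Subgroup G, H.FiniteIndex ∧ IsCyclic H) :
    IsCyclic G := by
  obtain ⟨H, _, _⟩ := hvc
  set N := H.normalCore
  have : IsCyclic N := isCyclic_of_le H.normalCore_le
  have hNC : N ≤ centralizer N := le_centralizer N
  have : IsCyclic (N.subgroupOf (centralizer N)) :=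
    isCyclic_of_injective (subgroupOfEquivOfLe hNC).toMonoidHom (MulEquiv.injective _)
  have : IsCyclic (centralizer N) := (htf.subgroup _).isCyclic_of_le_center (N.subgroupOf _)
    fun x hx ↦ mem_center_iff.mpr fun y ↦ Subtype.ext (y.2 x hx).symm
  obtain ⟨c, hc⟩ := (centralizer (N : Set G)).isCyclic_iff_exists_zpowers_eq_top.mp this
  have : (zpowers c).Normal := hc ▸ inferInstance
  exact isCyclic_iff_exists_zpowers_eq_top.mpr
    ⟨c, htf.zpowers_eq_top_of_centralizer_le (hc ▸ centralizer_le hNC)⟩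
end

section
/- Let G be a residually finite group and A an abelian subgroup of G that equals its own centralizer (for every g ∈ G \ A there exists p ∈ A with [g,p] ≠ 1). Then A is separable in G. -/
theorem commute_map_of_map_mem_image {M N F : Type*} [Mul M] [Mul N] [FunLike F M N]
    [MulHomClass F M N] (f : F) {S : Set M} (hS : ∀ x ∈ S, ∀ y ∈ S, x * y = y * x) {g p : M}
    (hg : f g ∈ f '' S) (hp : p ∈ S) : Commute (f g) (f p) := by
  obtain ⟨a, ha, hfa⟩ := hg
  rw [← hfa, Commute, SemiconjBy, ← map_mul, ← map_mul, hS a ha p hp]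

/-- If `G` is residually finite and `A` is an abelian subgroup which is its own centralizer
(every `g ∉ A` fails to commute with some element of `A`), then `A` is separable in `G`:
for every `g ∉ A` there is a homomorphism to a finite group separating `g` from `A`. -/
theorem selfCentralizing_abelian_subgroup_separable {G : Type*} [Group G]
    (hRF : ∀ g : G, g ≠ 1 → ∃ (Q : Type) (_ : Group Q) (_ : Finite Q) (φ : G →* Q), φ g ≠ 1)
    (A : Subgroup G) (hab : ∀ x ∈ A, ∀ y ∈ A, x * y = y * x)
    (hcent : ∀ g : G, g ∉ A → ∃ p ∈ A, g * p * g⁻¹ * p⁻¹ ≠ 1) :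
    ∀ g : G, g ∉ A → ∃ (Q : Type) (_ : Group Q) (_ : Finite Q) (h : G →* Q),
      h g ∉ h '' (A : Set G) := by
  intro g hg
  obtain ⟨p, hp, hgp⟩ := hcent g hg
  obtain ⟨Q, _, _, φ, hφ⟩ := hRF _ hgp
  refine ⟨Q, ‹_›, ‹_›, φ, fun hmem => hφ ?_⟩
  rw [← commutatorElement_def, map_commutatorElement, commutatorElement_eq_one_iff_commute]
  exact commute_map_of_map_mem_image φ hab hmem hp
end

section
/- Let G be a group, P ≤ G a subgroup, and P' ≤ P a finite-index subgroup of P. Suppose P' is separable in G. Then there exists a finite-index subgroup G₁ ≤ G such that G₁ ∩ P = P'. -/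
/-!
For each left coset `gP'` of `P'` in `P` choose a finite-index subgroup containing `P'` that
meets `gP'` only inside `P'`: the whole group if `g ∈ P'`, and otherwise one excluding `g`, which
then excludes all of `gP'`. Since `P'` has finite index in `P` there are finitely many cosets, and
the intersection of the chosen subgroups is the required `G₁`.
-/

namespace Subgroup

variable {G : Type*} [Group G]

theorem exists_finiteIndex_mem_of_inv_mul_mem {P' : Subgroup G}
    (hsep : ∀ g : G, g ∉ P' → ∃ K : Subgroup G, K.FiniteIndex ∧ P' ≤ K ∧ g ∉ K) (g : G) :
    ∃ K : Subgroup G, K.FiniteIndex ∧ P' ≤ K ∧ ∀ x ∈ K, g⁻¹ * x ∈ P' → x ∈ P' := by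
  by_cases hg : g ∈ P'
  · refine ⟨⊤, inferInstance, le_top, fun x _ hx => ?_⟩
    simpa using P'.mul_mem hg hx
  · obtain ⟨K, hK, hP'K, hgK⟩ := hsep g hg
    refine ⟨K, hK, hP'K, fun x hxK hx => absurd ?_ hgK⟩
    simpa using K.mul_mem hxK (K.inv_mem (hP'K hx))

theorem coe_inv_out_mul_mem {P P' : Subgroup G} (x : P) :
    (((QuotientGroup.mk x : P ⧸ P'.subgroupOf P).out : P) : G)⁻¹ * x ∈ P' := by
  have h : ((QuotientGroup.mk x : P ⧸ P'.subgroupOf P).out)⁻¹ * x ∈ P'.subgroupOf P := by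
    rw [← QuotientGroup.eq, QuotientGroup.out_eq']
  simpa [mem_subgroupOf] using h

end Subgroup

open Subgroup in
/-- If `P' ≤ P ≤ G` with `P'` of finite index in `P` and `P'` separable in `G`
(in the sense that every `g ∉ P'` is excluded by some finite-index subgroup containing `P'`),
then there is a finite-index subgroup `G₁` of `G` with `G₁ ∩ P = P'`. -/
theorem exists_finiteIndex_subgroup_inter_eq {G : Type*} [Group G]
    (P P' : Subgroup G) (hle : P' ≤ P) (hfi : P'.relIndex P ≠ 0)
    (hsep : ∀ g : G, g ∉ P' → ∃ K : Subgroup G, K.FiniteIndex ∧ P' ≤ K ∧ g ∉ K) :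
    ∃ G₁ : Subgroup G, G₁.FiniteIndex ∧ G₁ ⊓ P = P' := by
  have : (P'.subgroupOf P).FiniteIndex := ⟨hfi⟩
  have : Finite (P ⧸ P'.subgroupOf P) := finite_quotient_of_finiteIndex
  choose K hKfi hP'K hK using fun q : P ⧸ P'.subgroupOf P =>
    exists_finiteIndex_mem_of_inv_mul_mem hsep (q.out : G)
  refine ⟨⨅ q, K q, finiteIndex_iInf hKfi, le_antisymm ?_ (le_inf (le_iInf hP'K) hle)⟩
  rintro x ⟨hxK, hxP⟩
  exact hK _ x (mem_iInf.mp hxK _) (coe_inv_out_mul_mem (P := P) ⟨x, hxP⟩)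
end

section
/- Suppose G is residually finite and LERF, and P₁, …, P_n are subgroups of G each containing a finite-index abelian subgroup P_i' that is separable in G. Then G has a finite-index normal subgroup G'' such that G'' ∩ gP_ig⁻¹ is abelian for every i and every g ∈ G. -/
/-!
Separability of `Pᵢ'` lets one exclude each of the finitely many cosets of `Pᵢ'` in `Pᵢ` other
than `Pᵢ'` itself by a finite-index subgroup containing `Pᵢ'`; intersecting these gives a
finite-index `Gᵢ ≤ G` with `Gᵢ ∩ Pᵢ ≤ Pᵢ'`. The normal core `G''` of `⋂ᵢ Gᵢ` then satisfies
`G'' ∩ gPᵢg⁻¹ = g(G'' ∩ Pᵢ)g⁻¹ ≤ gPᵢ'g⁻¹`, which is abelian.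
-/

/-- A subgroup `H` of a group `K` is separable if it is an intersection of finite-index
subgroups of `K`. -/
def IsSeparableSubgroup {K : Type*} [Group K] (H : Subgroup K) : Prop :=
  ∃ S : Set (Subgroup K), (∀ J ∈ S, J.FiniteIndex) ∧ H = sInf S

namespace IsSeparableSubgroup

variable {K : Type*} [Group K] {H : Subgroup K}

theorem exists_finiteIndex_le_notMem (hH : IsSeparableSubgroup H) {x : K} (hx : x ∉ H) :
    ∃ J : Subgroup K, J.FiniteIndex ∧ H ≤ J ∧ x ∉ J := by
  obtain ⟨S, hS, rfl⟩ := hH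
  obtain ⟨J, hJS, hxJ⟩ := not_forall₂.mp (Subgroup.mem_sInf.not.mp hx)
  exact ⟨J, hS J hJS, sInf_le hJS, hxJ⟩

theorem exists_finiteIndex_inf_le (hH : IsSeparableSubgroup H) {P : Subgroup K}
    (hfi : H.relIndex P ≠ 0) : ∃ J : Subgroup K, J.FiniteIndex ∧ J ⊓ P ≤ H := by
  have : (H.subgroupOf P).FiniteIndex := ⟨hfi⟩
  have hsep : ∀ q : P ⧸ H.subgroupOf P,
      ∃ J : Subgroup K, J.FiniteIndex ∧ H ≤ J ∧ ((q.out : K) ∈ J → (q.out : K) ∈ H) := by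
    intro q
    by_cases hq : (q.out : K) ∈ H
    · exact ⟨⊤, inferInstance, le_top, fun _ => hq⟩
    · obtain ⟨J, hJ, hHJ, hqJ⟩ := hH.exists_finiteIndex_le_notMem hq
      exact ⟨J, hJ, hHJ, fun h => absurd h hqJ⟩
  choose J hJ hHJ hJH using hsep
  refine ⟨⨅ q, J q, Subgroup.finiteIndex_iInf hJ, ?_⟩
  rintro x ⟨hxJ, hxP⟩
  set q : P ⧸ H.subgroupOf P := QuotientGroup.mk ⟨x, hxP⟩
  -- `q.out = x * h` with `h ∈ H`, so `x` and `q.out` lie in the same cosets of `H` and of `J q`.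
  obtain ⟨⟨h, hh⟩, hout⟩ := QuotientGroup.mk_out_eq_mul (H.subgroupOf P) ⟨x, hxP⟩
  have hout' : (q.out : K) = x * h := congrArg Subtype.val hout
  have hhH : (h : K) ∈ H := Subgroup.mem_subgroupOf.mp hh
  have hqH : (q.out : K) ∈ H :=
    hJH q (hout' ▸ mul_mem (Subgroup.mem_iInf.mp hxJ q) (hHJ q hhH))
  simpa [hout'] using mul_mem hqH (inv_mem hhH)

end IsSeparableSubgroup

namespace Subgroup

variable {G : Type*} [Group G]

theorem inf_map_conj_le_map_conj {N J P P' : Subgroup G} [N.Normal] (hNJ : N ≤ J)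
    (hJP : J ⊓ P ≤ P') (g : G) :
    N ⊓ P.map (MulAut.conj g).toMonoidHom ≤ P'.map (MulAut.conj g).toMonoidHom := by
  calc N ⊓ P.map (MulAut.conj g).toMonoidHom
      = (N ⊓ P).map (MulAut.conj g).toMonoidHom := by
        rw [map_inf _ _ _ (MulAut.conj g).injective]
        congr 1
        exact (Normal.map_conj_eq N g).symm
    _ ≤ P'.map (MulAut.conj g).toMonoidHom := map_mono ((inf_le_inf_right P hNJ).trans hJP)

theorem mul_comm_of_le_map {H : Type*} [Group H] {S : Subgroup G} {T : Subgroup H} (f : G →* H)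
    (hS : ∀ x ∈ S, ∀ y ∈ S, x * y = y * x) (hT : T ≤ S.map f) :
    ∀ x ∈ T, ∀ y ∈ T, x * y = y * x := by
  intro x hx y hy
  obtain ⟨a, ha, rfl⟩ := hT hx
  obtain ⟨b, hb, rfl⟩ := hT hy
  rw [← map_mul, ← map_mul, hS a ha b hb]

end Subgroup

theorem exists_normal_finiteIndex_meeting_peripherals_abelian_general {G : Type*} [Group G]
    (n : ℕ) (P P' : Fin n → Subgroup G)
    (hfi : ∀ i, (P' i).relIndex (P i) ≠ 0)
    (hab : ∀ i, ∀ x ∈ P' i, ∀ y ∈ P' i, x * y = y * x)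
    (hsep : ∀ i, IsSeparableSubgroup (P' i)) :
    ∃ G'' : Subgroup G, G''.Normal ∧ G''.FiniteIndex ∧
      ∀ i, ∀ g : G,
        ∀ x ∈ G'' ⊓ (P i).map (MulAut.conj g).toMonoidHom,
          ∀ y ∈ G'' ⊓ (P i).map (MulAut.conj g).toMonoidHom, x * y = y * x := by
  choose J hJ hJP using fun i => (hsep i).exists_finiteIndex_inf_le (hfi i)
  have : (⨅ i, J i).FiniteIndex := Subgroup.finiteIndex_iInf hJ
  refine ⟨(⨅ i, J i).normalCore, Subgroup.normalCore_normal _, Subgroup.finiteIndex_normalCore _,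
    fun i g => Subgroup.mul_comm_of_le_map (MulAut.conj g).toMonoidHom (hab i) ?_⟩
  exact Subgroup.inf_map_conj_le_map_conj
    ((Subgroup.normalCore_le _).trans (iInf_le J i)) (hJP i) g

/-- If `G` is residually finite and LERF, and `P₁, …, Pₙ` are subgroups each containing a
finite-index abelian subgroup `Pᵢ'` separable in `G`, then `G` has a finite-index normal
subgroup `G''` meeting every conjugate of every `Pᵢ` in an abelian subgroup. -/
theorem exists_normal_finiteIndex_meeting_peripherals_abelian {G : Type*} [Group G]
    (hRF : ∀ g : G, g ≠ 1 → ∃ N : Subgroup G, N.Normal ∧ N.FiniteIndex ∧ g ∉ N)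
    (hLERF : ∀ H : Subgroup G, H.FG → IsSeparableSubgroup H)
    (n : ℕ) (P P' : Fin n → Subgroup G)
    (hle : ∀ i, P' i ≤ P i)
    (hfi : ∀ i, (P' i).relIndex (P i) ≠ 0)
    (hab : ∀ i, ∀ x ∈ P' i, ∀ y ∈ P' i, x * y = y * x)
    (hsep : ∀ i, IsSeparableSubgroup (P' i)) :
    ∃ G'' : Subgroup G, G''.Normal ∧ G''.FiniteIndex ∧
      ∀ i, ∀ g : G,
        ∀ x ∈ G'' ⊓ (P i).map (MulAut.conj g).toMonoidHom,
          ∀ y ∈ G'' ⊓ (P i).map (MulAut.conj g).toMonoidHom, x * y = y * x :=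
  exists_normal_finiteIndex_meeting_peripherals_abelian_general n P P' hfi hab hsep
end
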